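/- Let A be an n×n symmetric positive semidefinite matrix and H an n×M matrix. If v ∈ R^n and λ ∈ R^M satisfy A v + H λ = 0 and Hᵀ v = 0, and additionally vᵀ A v = 0 implies v = 0 on ker(Hᵀ) (conditional positive definiteness), and H has full column rank, then v = 0 and λ = 0. -/
import Mathlib

open Matrix

theorem stmt_17 (n M : ℕ)
    (A : Matrix (Fin n) (Fin n) ℝ) (hA : A.IsSymm) (hA' : A.PosSemidef)
    (H : Matrix (Fin n) (Fin M) ℝ) (hrank : H.rank = M)
    (hcpd : ∀ w : Fin n → ℝ, Hᵀ.mulVec w = 0 → w ⬝ᵥ A.mulVec w = 0 → w = 0)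
    (v : Fin n → ℝ) (lam : Fin M → ℝ)
    (h1 : A.mulVec v + H.mulVec lam = 0)
    (h2 : Hᵀ.mulVec v = 0) :
    v = 0 ∧ lam = 0 := by
  have key : v ⬝ᵥ A.mulVec v + v ⬝ᵥ H.mulVec lam = 0 := by
    rw [← dotProduct_add, h1, dotProduct_zero]
  have hvH : v ⬝ᵥ H.mulVec lam = 0 := by
    rw [dotProduct_mulVec, ← mulVec_transpose, h2, zero_dotProduct]
  have hvAv : v ⬝ᵥ A.mulVec v = 0 := by linarith
  have hv : v = 0 := hcpd v h2 hvAv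
  refine ⟨hv, ?_⟩
  have hHlam : H.mulVec lam = 0 := by
    have := h1
    rw [hv, mulVec_zero, zero_add] at this
    exact this
  -- injectivity from rank
  have hker : LinearMap.ker H.mulVecLin = ⊥ := by
    have h := H.mulVecLin.finrank_range_add_finrank_ker
    rw [show Module.finrank ℝ (LinearMap.range H.mulVecLin) = M from hrank,
      Module.finrank_pi, Fintype.card_fin] at h
    have : Module.finrank ℝ (LinearMap.ker H.mulVecLin) = 0 := by omega
    exact Submodule.finrank_eq_zero.mp this
  have : lam ∈ LinearMap.ker H.mulVecLin := hHlam
  rw [hker] at this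
  simpa using this
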